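/- arXiv:2101.01813 — 3 statements merged into one kernel-verified Lean document; each statement's English description precedes it below -/
import Mathlib

section
/- There exist ε > 0 and N ≥ 0 such that for every n ≥ N, the number of elements g of the ball B_n in the free group F₂ (with respect to the generating set S_γ) satisfying κ(g) < 0 is at least ε·#B_n. In other words, F₂ has negative conjugation curvature with positive density with respect to S_γ. -/
section Defs

variable {G : Type*} [Group G]

/-- Word length with respect to a generating set `S`: the least `n` such that `g`
is a product of `n` elements of `S`. -/
noncomputable def wlen (S : Set G) (g : G) : ℕ :=
  sInf {n | ∃ l : List G, (∀ x ∈ l, x ∈ S) ∧ l.length = n ∧ l.prod = g}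

/-- Word metric: `d(g,h) = |h⁻¹ g|`. -/
noncomputable def wdist (S : Set G) (x y : G) : ℝ := wlen S (y⁻¹ * x)

/-- Gromov product `(x,y)_w = ½ (d(x,w) + d(w,y) − d(x,y))`. -/
noncomputable def gp (S : Set G) (x y w : G) : ℝ :=
  (wdist S x w + wdist S w y - wdist S x y) / 2

/-- The word metric is `δ`-hyperbolic (Gromov's four-point condition). -/
def IsDeltaHyperbolic (S : Set G) (δ : ℝ) : Prop :=
  ∀ x y z w : G, gp S x y w ≥ min (gp S x z w) (gp S y z w) - δ

/-- A group is virtually cyclic if it has a cyclic subgroup of finite index. -/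
def VirtuallyCyclic (G : Type*) [Group G] : Prop :=
  ∃ H : Subgroup G, IsCyclic H ∧ H.FiniteIndex

/-- `GenCon(g)`: the average word length of the conjugates of `g`
by the generators in `S`. -/
noncomputable def genCon (S : Set G) (g : G) : ℝ :=
  (∑ᶠ s ∈ S, (wlen S (s⁻¹ * g * s) : ℝ)) / S.ncard

/-- Conjugation curvature `κ(g) = (|g| − GenCon(g)) / |g|`. -/
noncomputable def kappa (S : Set G) (g : G) : ℝ :=
  ((wlen S g : ℝ) - genCon S g) / (wlen S g)

/-- `k`-spherical conjugation curvature
`κ_k(g) = (|g| − (1/#S_k) Σ_{s ∈ S_k} d(gs,s)) / |g|`; note `d(gs,s) = |s⁻¹ g s|`. -/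
noncomputable def kappaK (S : Set G) (k : ℕ) (g : G) : ℝ :=
  ((wlen S g : ℝ) -
      (∑ᶠ s ∈ {x : G | wlen S x = k}, (wlen S (s⁻¹ * g * s) : ℝ)) /
        ({x : G | wlen S x = k} : Set G).ncard) / (wlen S g)

end Defs

/-- The free group of rank 2. -/
abbrev F2 := FreeGroup Bool

namespace F2Gen

/-- The generator `a`. -/
def a : F2 := FreeGroup.of true

/-- The generator `b`. -/
def b : F2 := FreeGroup.of false

end F2Gen

open F2Gen

/-- The word `w = ababa`. -/
def wγ : F2 := a * b * a * b * a

/-- The generating set `S_γ = {a, a⁻¹, b, b⁻¹, w, w⁻¹}` of `F₂`. -/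
def Sγ : Set F2 := {a, a⁻¹, b, b⁻¹, wγ, wγ⁻¹}

/-!
Conjugating by a generator `s` permutes `F₂`, so on the punctured ball `F = Bₙ \ {1}` it can only
raise the total length, and it does so by at least the number of elements it pushes out of the
ball. Ping-pong on reduced words: if the word of `g ≠ 1` does not start with the letter `ℓ`, the
word of `ℓ⁻¹ g ℓ` starts with `ℓ⁻¹`; hence the four conjugations by `a^{±1}, b^{±1}` together push
out at least `2 #F` elements. On the other hand, summed over the six generators, the length of a
single `g` rises by at most `12`, and it rises at all only if `κ(g) < 0`; so at least `#F / 6`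
elements of `F` are negatively curved.
-/

open Finset

section WordLength

variable {G : Type*} [Group G] {S : Set G}

theorem wlen_list_prod_le {l : List G} (hl : ∀ x ∈ l, x ∈ S) : wlen S l.prod ≤ l.length :=
  Nat.sInf_le ⟨l, hl, rfl, rfl⟩

theorem exists_list_length_eq_wlen (hS : Submonoid.closure S = ⊤) (g : G) :
    ∃ l : List G, (∀ x ∈ l, x ∈ S) ∧ l.length = wlen S g ∧ l.prod = g := by
  obtain ⟨l, hl, rfl⟩ := Submonoid.exists_list_of_mem_closure (hS ▸ Submonoid.mem_top g)
  have hne : {n | ∃ m : List G, (∀ x ∈ m, x ∈ S) ∧ m.length = n ∧ m.prod = l.prod}.Nonempty :=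
    ⟨_, l, hl, rfl, rfl⟩
  exact Nat.sInf_mem hne

theorem wlen_one : wlen S (1 : G) = 0 :=
  Nat.le_zero.mp (wlen_list_prod_le (l := []) (by simp))

theorem wlen_le_one_of_mem {s : G} (hs : s ∈ S) : wlen S s ≤ 1 := by
  simpa using wlen_list_prod_le (S := S) (l := [s]) (by simpa)

theorem wlen_eq_zero_iff (hS : Submonoid.closure S = ⊤) {g : G} : wlen S g = 0 ↔ g = 1 := by
  refine ⟨fun h => ?_, fun h => h ▸ wlen_one⟩
  obtain ⟨l, -, hlen, rfl⟩ := exists_list_length_eq_wlen hS g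
  simp [List.length_eq_zero_iff.mp (hlen.trans h)]

theorem wlen_mul_le (hS : Submonoid.closure S = ⊤) (g h : G) :
    wlen S (g * h) ≤ wlen S g + wlen S h := by
  obtain ⟨l, hl, hlen, rfl⟩ := exists_list_length_eq_wlen hS g
  obtain ⟨m, hm, hmlen, rfl⟩ := exists_list_length_eq_wlen hS h
  rw [← hlen, ← hmlen, ← List.length_append, ← List.prod_append]
  exact wlen_list_prod_le fun x hx => (List.mem_append.mp hx).elim (hl x) (hm x)

theorem wlen_conj_le (hS : Submonoid.closure S = ⊤) {s : G} (hs : s ∈ S) (hs' : s⁻¹ ∈ S)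
    (g : G) : wlen S (s⁻¹ * g * s) ≤ wlen S g + 2 := by
  have := wlen_mul_le hS (s⁻¹ * g) s
  have := wlen_mul_le hS s⁻¹ g
  have := wlen_le_one_of_mem hs
  have := wlen_le_one_of_mem hs'
  omega

theorem finite_setOf_wlen_le (hS : Submonoid.closure S = ⊤) (hfin : S.Finite) (n : ℕ) :
    {g | wlen S g ≤ n}.Finite := by
  have : Finite S := hfin
  refine ((List.finite_length_le S n).image fun l => (l.map (↑)).prod).subset fun g hg => ?_
  obtain ⟨l, hl, hlen, rfl⟩ := exists_list_length_eq_wlen hS g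
  refine ⟨l.attach.map fun x => (⟨x.1, hl x.1 x.2⟩ : S), by simpa [hlen] using hg, ?_⟩
  simp

theorem kappa_neg_of_card_mul_lt_sum {T : Finset G} (hTS : (T : Set G) = S) {g : G}
    (hg : wlen S g ≠ 0) (h : #T * wlen S g < ∑ s ∈ T, wlen S (s⁻¹ * g * s)) :
    kappa S g < 0 := by
  subst hTS
  have hT : (0 : ℝ) < #T := by
    obtain rfl | hne := T.eq_empty_or_nonempty
    · simp at h
    · exact_mod_cast hne.card_pos
  have h' : (#T : ℝ) * wlen (T : Set G) g < ∑ s ∈ T, (wlen (T : Set G) (s⁻¹ * g * s) : ℝ) := by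
    exact_mod_cast h
  rw [kappa, genCon, finsum_mem_coe_finset, Set.ncard_coe_finset]
  refine div_neg_of_neg_of_pos ?_ (by positivity)
  rw [sub_neg, lt_div_iff₀ hT]
  linarith

end WordLength

theorem Finset.sum_add_card_image_sdiff_le_sum_comp {α : Type*} [DecidableEq α] {F : Finset α}
    {f : α → ℕ} {σ : α → α} {n : ℕ} (hσ : Set.InjOn σ F) (hF : ∀ x ∈ F, f x ≤ n)
    (hout : ∀ x ∈ F, σ x ∉ F → n < f (σ x)) :
    ∑ x ∈ F, f x + #(F.image σ \ F) ≤ ∑ x ∈ F, f (σ x) := by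
  set C := F.image σ
  have hcard : #(C \ F) = #(F \ C) := card_sdiff_comm (card_image_of_injOn hσ)
  have hlow : #(C \ F) * (n + 1) ≤ ∑ x ∈ C \ F, f x := by
    rw [← smul_eq_mul]
    refine card_nsmul_le_sum _ _ _ fun y hy => ?_
    obtain ⟨hyC, hyF⟩ := mem_sdiff.mp hy
    obtain ⟨x, hx, rfl⟩ := mem_image.mp hyC
    exact hout x hx hyF
  have hup : ∑ x ∈ F \ C, f x ≤ #(F \ C) * n := by
    rw [← smul_eq_mul]
    exact sum_le_card_nsmul _ _ _ fun x hx => hF x (mem_sdiff.mp hx).1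
  rw [← sum_image hσ, ← sum_inter_add_sum_sdiff C F, ← sum_inter_add_sum_sdiff F C, inter_comm]
  rw [hcard] at hlow ⊢
  linarith

section ConjEscape

variable {G : Type*} [Group G] [DecidableEq G]

def conjEscape (F : Finset G) (s : G) : Finset G :=
  F.image (fun g => s⁻¹ * g * s) \ F

theorem sum_wlen_add_card_conjEscape_le {S : Set G} {F : Finset G} {n : ℕ}
    (hF : ∀ g, g ∈ F ↔ g ≠ 1 ∧ wlen S g ≤ n) (s : G) :
    ∑ g ∈ F, wlen S g + #(conjEscape F s) ≤ ∑ g ∈ F, wlen S (s⁻¹ * g * s) := by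
  refine sum_add_card_image_sdiff_le_sum_comp (fun g _ h _ hgh => by simpa using hgh)
    (fun g hg => ((hF g).1 hg).2) fun g hg hout => ?_
  have hconj : s⁻¹ * g * s ≠ 1 := by simpa [mul_assoc, inv_mul_eq_one] using ((hF g).1 hg).1
  by_contra hle
  exact hout ((hF _).2 ⟨hconj, not_lt.mp hle⟩)

theorem sum_card_conjEscape_le {S : Set G} (hS : Submonoid.closure S = ⊤) {T : Finset G}
    (hT : ∀ s ∈ T, s ∈ S ∧ s⁻¹ ∈ S) {F : Finset G} {n : ℕ}
    (hF : ∀ g, g ∈ F ↔ g ≠ 1 ∧ wlen S g ≤ n) :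
    ∑ s ∈ T, #(conjEscape F s) ≤
      2 * #T * #{g ∈ F | #T * wlen S g < ∑ s ∈ T, wlen S (s⁻¹ * g * s)} := by
  set P : G → Prop := fun g => #T * wlen S g < ∑ s ∈ T, wlen S (s⁻¹ * g * s)
  have hpoint : ∀ g, ∑ s ∈ T, wlen S (s⁻¹ * g * s) ≤
      #T * wlen S g + 2 * #T * (if P g then 1 else 0) := by
    intro g
    split_ifs with hg
    · calc ∑ s ∈ T, wlen S (s⁻¹ * g * s) ≤ ∑ s ∈ T, (wlen S g + 2) :=
            sum_le_sum fun s hs => wlen_conj_le hS (hT s hs).1 (hT s hs).2 g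
        _ = #T * wlen S g + 2 * #T * 1 := by rw [sum_const, smul_eq_mul]; ring
    · simpa using not_lt.mp hg
  have htotal : ∑ g ∈ F, ∑ s ∈ T, wlen S (s⁻¹ * g * s) ≤
      #T * ∑ g ∈ F, wlen S g + 2 * #T * #{g ∈ F | P g} := by
    calc ∑ g ∈ F, ∑ s ∈ T, wlen S (s⁻¹ * g * s)
        ≤ ∑ g ∈ F, (#T * wlen S g + 2 * #T * (if P g then 1 else 0)) :=
          sum_le_sum fun g _ => hpoint g
      _ = #T * ∑ g ∈ F, wlen S g + 2 * #T * #{g ∈ F | P g} := by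
        rw [sum_add_distrib, ← mul_sum, ← mul_sum, card_filter]
  have hrearr : #T * ∑ g ∈ F, wlen S g + ∑ s ∈ T, #(conjEscape F s) ≤
      ∑ g ∈ F, ∑ s ∈ T, wlen S (s⁻¹ * g * s) := by
    calc #T * ∑ g ∈ F, wlen S g + ∑ s ∈ T, #(conjEscape F s)
        = ∑ s ∈ T, (∑ g ∈ F, wlen S g + #(conjEscape F s)) := by
          rw [sum_add_distrib, sum_const, smul_eq_mul]
      _ ≤ ∑ s ∈ T, ∑ g ∈ F, wlen S (s⁻¹ * g * s) :=
          sum_le_sum fun s _ => sum_wlen_add_card_conjEscape_le hF s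
      _ = ∑ g ∈ F, ∑ s ∈ T, wlen S (s⁻¹ * g * s) := sum_comm
  change _ ≤ 2 * #T * #{g ∈ F | P g}
  omega

end ConjEscape

namespace FreeGroup

variable {α : Type*}

theorem IsReduced.cons {L : List (α × Bool)} (hL : IsReduced L) {c : α × Bool}
    (hc : L.head? ≠ some (c.1, !c.2)) : IsReduced (c :: L) := by
  cases L with
  | nil => exact IsReduced.singleton
  | cons d L =>
    refine isReduced_cons_cons.mpr ⟨fun h => ?_, hL⟩
    obtain ⟨c1, c2⟩ := c
    obtain ⟨d1, d2⟩ := d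
    cases c2 <;> cases d2 <;> simp_all

variable [DecidableEq α]

theorem IsReduced.head?_reduce_append_singleton {L : List (α × Bool)} (hL : IsReduced L)
    (h2 : 2 ≤ L.length) (c : α × Bool) : (reduce (L ++ [c])).head? = L.head? := by
  obtain ⟨L', d, rfl⟩ : ∃ L' d, L = L' ++ [d] :=
    ⟨L.dropLast, L.getLast (by grind), (L.dropLast_append_getLast _).symm⟩
  have hL' : L' ≠ [] := by rintro rfl; simp at h2
  rw [List.head?_append_of_ne_nil _ hL']
  by_cases hdc : d = (c.1, !c.2)
  · subst hdc
    have hstep : Red.Step (L' ++ [(c.1, !c.2)] ++ [c]) (L' ++ []) := by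
      simpa using Red.Step.not_rev (L₁ := L') (L₂ := []) (x := c.1) (b := c.2)
    rw [reduce.Step.eq hstep, List.append_nil,
      (hL.infix (List.prefix_append _ _).isInfix).reduce_eq]
  · have hdc' : IsReduced [d, c] := by
      rw [isReduced_cons_cons]
      refine ⟨fun h => ?_, IsReduced.singleton⟩
      obtain ⟨d1, d2⟩ := d
      obtain ⟨c1, c2⟩ := c
      cases d2 <;> cases c2 <;> simp_all
    rw [(hL.append_overlap hdc' (List.cons_ne_nil _ _)).reduce_eq, List.append_assoc,
      List.head?_append_of_ne_nil _ hL']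

theorem toWord_mk_singleton_mul {g : FreeGroup α} {c : α × Bool}
    (hg : g.toWord.head? ≠ some (c.1, !c.2)) : (mk [c] * g).toWord = c :: g.toWord := by
  rw [toWord_mul, toWord_mk, reduce_singleton, List.singleton_append,
    (isReduced_toWord.cons hg).reduce_eq]

theorem head?_toWord_mul_mk_singleton {g : FreeGroup α} (hg : 2 ≤ g.toWord.length)
    (c : α × Bool) : (g * mk [c]).toWord.head? = g.toWord.head? := by
  rw [toWord_mul, toWord_mk, reduce_singleton, isReduced_toWord.head?_reduce_append_singleton hg]

theorem head?_toWord_conj_mk_singleton {g : FreeGroup α} (hg : g ≠ 1) {c : α × Bool}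
    (hgc : g.toWord.head? ≠ some c) :
    ((mk [c])⁻¹ * g * mk [c]).toWord.head? = some (c.1, !c.2) := by
  have hinv : (mk [c])⁻¹ = mk [(c.1, !c.2)] := by simp [inv_mk, invRev]
  have hword : ((mk [c])⁻¹ * g).toWord = (c.1, !c.2) :: g.toWord := by
    rw [hinv]
    exact toWord_mk_singleton_mul (by simpa using hgc)
  have hlen : 2 ≤ ((mk [c])⁻¹ * g).toWord.length := by
    rw [hword, List.length_cons]
    have : g.toWord ≠ [] := toWord_eq_nil_iff.not.mpr hg
    have := List.length_pos_iff.mpr this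
    omega
  rw [head?_toWord_mul_mk_singleton hlen, hword, List.head?_cons]

theorem card_le_card_filter_head?_add_card_conjEscape (F : Finset (FreeGroup α))
    (h1 : 1 ∉ F) (c : α × Bool) :
    #F ≤ #{g ∈ F | g.toWord.head? = some c} + #{g ∈ F | g.toWord.head? = some (c.1, !c.2)} +
      #(conjEscape F (mk [c])) := by
  have hsplit := card_filter_add_card_filter_not (s := F) (p := fun g => g.toWord.head? = some c)
  set R := {g ∈ F | ¬g.toWord.head? = some c}
  have hR : #R = #(R.image fun g => (mk [c])⁻¹ * g * mk [c]) :=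
    (card_image_of_injective _ fun g h hgh => by simpa using hgh).symm
  have hsub : R.image (fun g => (mk [c])⁻¹ * g * mk [c]) ⊆
      {g ∈ F | g.toWord.head? = some (c.1, !c.2)} ∪ conjEscape F (mk [c]) := by
    simp only [subset_iff, mem_image, mem_filter, R]
    rintro _ ⟨g, ⟨hgF, hgc⟩, rfl⟩
    have hhead := head?_toWord_conj_mk_singleton (ne_of_mem_of_not_mem hgF h1) hgc
    by_cases hin : (mk [c])⁻¹ * g * mk [c] ∈ F
    · exact mem_union_left _ (mem_filter.mpr ⟨hin, hhead⟩)
    · exact mem_union_right _ (mem_sdiff.mpr ⟨mem_image_of_mem _ hgF, hin⟩)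
  have := (card_le_card hsub).trans (card_union_le _ _)
  omega

variable [Fintype α]

theorem sum_card_filter_head?_le (F : Finset (FreeGroup α)) :
    ∑ c : α × Bool, #{g ∈ F | g.toWord.head? = some c} ≤ #F := by
  rw [card_eq_sum_card_fiberwise (f := fun g => g.toWord.head?) (t := univ) (by simp),
    Fintype.sum_option]
  exact Nat.le_add_left _ _

theorem two_mul_card_mul_card_le_sum_card_conjEscape (F : Finset (FreeGroup α)) (h1 : 1 ∉ F) :
    2 * Fintype.card α * #F ≤ 2 * #F + ∑ c : α × Bool, #(conjEscape F (mk [c])) := by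
  have hflip : ∑ c : α × Bool, #{g ∈ F | g.toWord.head? = some (c.1, !c.2)} =
      ∑ c : α × Bool, #{g ∈ F | g.toWord.head? = some c} :=
    Fintype.sum_equiv ((Equiv.refl α).prodCongr Equiv.boolNot) _ _ fun _ => rfl
  calc 2 * Fintype.card α * #F = ∑ _c : α × Bool, #F := by
        simp [Fintype.card_prod, mul_comm]
    _ ≤ ∑ c : α × Bool, (#{g ∈ F | g.toWord.head? = some c} +
          #{g ∈ F | g.toWord.head? = some (c.1, !c.2)} + #(conjEscape F (mk [c]))) :=
        sum_le_sum fun c _ => card_le_card_filter_head?_add_card_conjEscape F h1 c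
    _ = 2 * ∑ c : α × Bool, #{g ∈ F | g.toWord.head? = some c} +
          ∑ c : α × Bool, #(conjEscape F (mk [c])) := by
        rw [sum_add_distrib, sum_add_distrib, hflip, two_mul]
    _ ≤ 2 * #F + ∑ c : α × Bool, #(conjEscape F (mk [c])) := by
        gcongr
        exact sum_card_filter_head?_le F

end FreeGroup

def SγFinset : Finset F2 := {a, a⁻¹, b, b⁻¹, wγ, wγ⁻¹}

theorem coe_SγFinset : (SγFinset : Set F2) = Sγ := by
  simp [SγFinset, Sγ]

theorem card_SγFinset : #SγFinset = 6 := by decide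

theorem mk_singleton_mem_SγFinset (c : Bool × Bool) : FreeGroup.mk [c] ∈ SγFinset := by
  rcases c with ⟨_ | _, _ | _⟩ <;> decide

theorem inv_mem_Sγ {s : F2} (hs : s ∈ Sγ) : s⁻¹ ∈ Sγ := by
  simp only [Sγ, Set.mem_insert_iff, Set.mem_singleton_iff] at hs ⊢
  rcases hs with rfl | rfl | rfl | rfl | rfl | rfl <;> simp

theorem submonoidClosure_Sγ : Submonoid.closure Sγ = ⊤ := by
  rw [eq_top_iff, ← Subgroup.top_toSubmonoid, ← FreeGroup.closure_range_of,
    Subgroup.closure_toSubmonoid]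
  refine Submonoid.closure_mono (Set.union_subset ?_ fun s hs => ?_)
  · rintro _ ⟨_ | _, rfl⟩ <;> simp [Sγ, a, b]
  · simpa using inv_mem_Sγ (s := s⁻¹) (by rcases hs with ⟨_ | _, hx⟩ <;> simp [Sγ, a, b, ← hx])

theorem card_le_six_mul_card_filter_kappa_neg {F : Finset F2} {n : ℕ}
    (hF : ∀ g, g ∈ F ↔ g ≠ 1 ∧ wlen Sγ g ≤ n) : #F ≤ 6 * #{g ∈ F | kappa Sγ g < 0} := by
  have h1 : (1 : F2) ∉ F := fun h => ((hF 1).1 h).1 rfl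
  have hletters : 2 * #F ≤ ∑ s ∈ SγFinset, #(conjEscape F s) := by
    have hping := FreeGroup.two_mul_card_mul_card_le_sum_card_conjEscape F h1
    rw [Fintype.card_bool, ← sum_image (f := fun s => #(conjEscape F s))
      (g := fun c => FreeGroup.mk [c]) fun c _ c' _ h => by
        simpa using congrArg FreeGroup.toWord h] at hping
    have := sum_le_sum_of_subset (f := fun s => #(conjEscape F s))
      (image_subset_iff.mpr fun c (_ : c ∈ univ) => mk_singleton_mem_SγFinset c)
    omega
  have hT : ∀ s ∈ SγFinset, s ∈ Sγ ∧ s⁻¹ ∈ Sγ := fun s hs => by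
    have hs : s ∈ Sγ := coe_SγFinset ▸ mem_coe.mpr hs
    exact ⟨hs, inv_mem_Sγ hs⟩
  have hup := sum_card_conjEscape_le submonoidClosure_Sγ hT hF
  rw [card_SγFinset] at hup
  have hneg : {g ∈ F | 6 * wlen Sγ g < ∑ s ∈ SγFinset, wlen Sγ (s⁻¹ * g * s)} ⊆
      {g ∈ F | kappa Sγ g < 0} := by
    refine monotone_filter_right F fun g hg hlt => ?_
    refine kappa_neg_of_card_mul_lt_sum coe_SγFinset ?_ (card_SγFinset ▸ hlt)
    exact (wlen_eq_zero_iff submonoidClosure_Sγ).not.mpr ((hF g).1 hg).1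
  have := card_le_card hneg
  omega

/-- With respect to `S_γ`, `F₂` has negative conjugation curvature with positive density:
there exist `ε > 0` and `N` such that for all `n ≥ N`, the number of elements of the
ball `B_n` with negative curvature is at least `ε · #B_n`. -/
theorem negative_curvature_positive_density :
    ∃ ε : ℝ, 0 < ε ∧ ∃ N : ℕ, ∀ n : ℕ, N ≤ n →
      ε * (({g : F2 | wlen Sγ g ≤ n} : Set F2).ncard : ℝ) ≤
        (({g : F2 | wlen Sγ g ≤ n ∧ g ≠ 1 ∧ kappa Sγ g < 0} : Set F2).ncard : ℝ) := by
  refine ⟨1 / 12, by norm_num, 1, fun n hn => ?_⟩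
  have hball := finite_setOf_wlen_le submonoidClosure_Sγ (coe_SγFinset ▸ SγFinset.finite_toSet) n
  set F := hball.toFinset.erase 1
  have hF : ∀ g, g ∈ F ↔ g ≠ 1 ∧ wlen Sγ g ≤ n := by simp [F]
  have hball_card : {g : F2 | wlen Sγ g ≤ n}.ncard = #F + 1 := by
    rw [Set.ncard_eq_toFinset_card _ hball, card_erase_add_one (by simp [wlen_one])]
  have hneg_card : {g : F2 | wlen Sγ g ≤ n ∧ g ≠ 1 ∧ kappa Sγ g < 0}.ncard =
      #{g ∈ F | kappa Sγ g < 0} := by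
    rw [← Set.ncard_coe_finset, coe_filter]
    congr 1
    ext g
    simp only [Set.mem_ofPred_eq, hF]
    tauto
  have ha : a ∈ F := (hF a).2 ⟨FreeGroup.of_ne_one _, (wlen_le_one_of_mem (by simp [Sγ])).trans hn⟩
  have hcount : #F + 1 ≤ 12 * #{g ∈ F | kappa Sγ g < 0} := by
    have := card_pos.mpr ⟨a, ha⟩
    have := card_le_six_mul_card_filter_kappa_neg hF
    omega
  have hcount' : ((#F + 1 : ℕ) : ℝ) ≤ 12 * (#{g ∈ F | kappa Sγ g < 0} : ℝ) := by
    exact_mod_cast hcount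
  rw [hball_card, hneg_card]
  linarith
end

section
/- In the free group F₂ with generating set S_γ: if g ∈ F₂ has a geodesic spelling whose first two letters are a, a, then g has no geodesic spelling whose first letter is b⁻¹. Similarly, if g′ ∈ F₂ has a geodesic spelling whose first two letters are a⁻¹, a⁻¹, then g′ has no geodesic spelling whose first letter is b. -/
open F2Gen

namespace DAux

abbrev Ltr := Bool × Bool
def la : Ltr := (true, true)
def lA : Ltr := (true, false)
def lb : Ltr := (false, true)
def lB : Ltr := (false, false)

def p4 (x1 x2 x3 x4 : Ltr) : ℕ :=
  if ([x1,x2,x3,x4] = [la,lb,la,lb] ∨ [x1,x2,x3,x4] = [lb,la,lb,la] ∨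
      [x1,x2,x3,x4] = [lA,lB,lA,lB] ∨ [x1,x2,x3,x4] = [lB,lA,lB,lA]) then 1 else 0

def p5 (x1 x2 x3 x4 x5 : Ltr) : ℕ :=
  if ([x1,x2,x3,x4,x5] = [la,lb,la,lb,la] ∨ [x1,x2,x3,x4,x5] = [lA,lB,lA,lB,lA]) then 2 else 0

def mu : List Ltr → ℕ
  | x1 :: x2 :: x3 :: x4 :: x5 :: t =>
      max (mu (x2 :: x3 :: x4 :: x5 :: t))
        (max (p4 x1 x2 x3 x4 + mu (x5 :: t)) (p5 x1 x2 x3 x4 x5 + mu t))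
  | [x1, x2, x3, x4] => p4 x1 x2 x3 x4
  | _ => 0
termination_by l => l.length

@[simp] lemma mu_nil : mu [] = 0 := by simp [mu]
@[simp] lemma mu_one (x : Ltr) : mu [x] = 0 := by simp [mu]
@[simp] lemma mu_two (x y : Ltr) : mu [x, y] = 0 := by simp [mu]
@[simp] lemma mu_three (x y z : Ltr) : mu [x, y, z] = 0 := by simp [mu]
lemma mu_four (x1 x2 x3 x4 : Ltr) : mu [x1,x2,x3,x4] = p4 x1 x2 x3 x4 := by simp [mu]
lemma mu_cons5 (x1 x2 x3 x4 x5 : Ltr) (t : List Ltr) :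
    mu (x1 :: x2 :: x3 :: x4 :: x5 :: t) =
      max (mu (x2 :: x3 :: x4 :: x5 :: t))
        (max (p4 x1 x2 x3 x4 + mu (x5 :: t)) (p5 x1 x2 x3 x4 x5 + mu t)) := by
  rw [mu]

lemma p4_le_one (x1 x2 x3 x4 : Ltr) : p4 x1 x2 x3 x4 ≤ 1 := by
  unfold p4; split <;> simp

/-- monotonicity: dropping head can't increase mu -/
lemma mu_le_cons (x : Ltr) (l : List Ltr) : mu l ≤ mu (x :: l) := by
  match l with
  | [] => simp
  | [y1] => simp
  | [y1, y2] => simp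
  | [y1, y2, y3] => simp
  | y1 :: y2 :: y3 :: y4 :: t => rw [mu_cons5]; exact le_max_left _ _

lemma mu_ge_p4 (x1 x2 x3 x4 : Ltr) (t : List Ltr) :
    p4 x1 x2 x3 x4 + mu t ≤ mu (x1 :: x2 :: x3 :: x4 :: t) := by
  match t with
  | [] => simp [mu_four]
  | y :: t' => rw [mu_cons5]; exact le_max_of_le_right (le_max_left _ _)

lemma mu_ge_p5 (x1 x2 x3 x4 x5 : Ltr) (t : List Ltr) :
    p5 x1 x2 x3 x4 x5 + mu t ≤ mu (x1 :: x2 :: x3 :: x4 :: x5 :: t) := by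
  rw [mu_cons5]; exact le_max_of_le_right (le_max_right _ _)

lemma mu_le_one_add (x : Ltr) (l : List Ltr) : mu (x :: l) ≤ 1 + mu l := by
  match l with
  | [] => simp
  | [y1] => simp
  | [y1, y2] => simp
  | [y1, y2, y3] =>
    rw [show mu (x :: [y1,y2,y3]) = p4 x y1 y2 y3 from mu_four _ _ _ _]
    have := p4_le_one x y1 y2 y3; omega
  | y1 :: y2 :: y3 :: y4 :: t =>
    rw [mu_cons5]
    refine max_le (by omega) (max_le ?_ ?_)
    · have h1 : mu (y4 :: t) ≤ mu (y3 :: y4 :: t) := mu_le_cons _ _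
      have h2 : mu (y3 :: y4 :: t) ≤ mu (y2 :: y3 :: y4 :: t) := mu_le_cons _ _
      have h3 : mu (y2 :: y3 :: y4 :: t) ≤ mu (y1 :: y2 :: y3 :: y4 :: t) := mu_le_cons _ _
      have := p4_le_one x y1 y2 y3
      omega
    · by_cases h : ([x,y1,y2,y3,y4] = [la,lb,la,lb,la] ∨ [x,y1,y2,y3,y4] = [lA,lB,lA,lB,lA])
      · have hp5 : p5 x y1 y2 y3 y4 = 2 := by unfold p5; rw [if_pos h]
        have hp4 : p4 y1 y2 y3 y4 = 1 := by
          rcases h with h | h <;> · simp only [List.cons.injEq] at h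
                                    obtain ⟨_, _, _, _, _, _⟩ := h
                                    subst_vars
                                    simp [p4, la, lb, lA, lB]
        have := mu_ge_p4 y1 y2 y3 y4 t
        omega
      · have hp5 : p5 x y1 y2 y3 y4 = 0 := by unfold p5; rw [if_neg h]
        have h1 : mu t ≤ mu (y4 :: t) := mu_le_cons _ _
        have h2 : mu (y4 :: t) ≤ mu (y3 :: y4 :: t) := mu_le_cons _ _
        have h3 : mu (y3 :: y4 :: t) ≤ mu (y2 :: y3 :: y4 :: t) := mu_le_cons _ _
        have h4 : mu (y2 :: y3 :: y4 :: t) ≤ mu (y1 :: y2 :: y3 :: y4 :: t) := mu_le_cons _ _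
        omega

/-- workhorse: if no pattern can start at the new head, mu is unchanged -/
lemma mu_cons_eq_of (x : Ltr) (l : List Ltr)
    (h4 : ∀ y1 y2 y3 t, l = y1 :: y2 :: y3 :: t → p4 x y1 y2 y3 = 0)
    (h5 : ∀ y1 y2 y3 y4 t, l = y1 :: y2 :: y3 :: y4 :: t → p5 x y1 y2 y3 y4 = 0) :
    mu (x :: l) = mu l := by
  refine le_antisymm ?_ (mu_le_cons x l)
  match l with
  | [] => simp
  | [y1] => simp
  | [y1, y2] => simp
  | [y1, y2, y3] => simp [mu_four, h4 y1 y2 y3 [] rfl]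
  | y1 :: y2 :: y3 :: y4 :: t =>
    rw [mu_cons5, h4 y1 y2 y3 (y4 :: t) rfl, h5 y1 y2 y3 y4 t rfl]
    have h1 : mu (y4 :: t) ≤ mu (y3 :: y4 :: t) := mu_le_cons _ _
    have h2 : mu (y3 :: y4 :: t) ≤ mu (y2 :: y3 :: y4 :: t) := mu_le_cons _ _
    have h3 : mu (y2 :: y3 :: y4 :: t) ≤ mu (y1 :: y2 :: y3 :: y4 :: t) := mu_le_cons _ _
    have h0 : mu t ≤ mu (y4 :: t) := mu_le_cons _ _
    simp only [max_le_iff]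
    omega



-- finite decidable facts about the pattern scores
lemma P4a : ∀ y1 y2 y3 : Ltr, y1 ≠ lb → p4 la y1 y2 y3 = 0 := by decide
lemma P4b : ∀ y1 y2 y3 : Ltr, y1 ≠ la → p4 lb y1 y2 y3 = 0 := by decide
lemma P4A : ∀ y1 y2 y3 : Ltr, y1 ≠ lB → p4 lA y1 y2 y3 = 0 := by decide
lemma P4B : ∀ y1 y2 y3 : Ltr, y1 ≠ lA → p4 lB y1 y2 y3 = 0 := by decide
lemma P5a : ∀ y1 y2 y3 y4 : Ltr, y1 ≠ lb → p5 la y1 y2 y3 y4 = 0 := by decide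
lemma P5b : ∀ y1 y2 y3 y4 : Ltr, p5 lb y1 y2 y3 y4 = 0 := by decide
lemma P5A : ∀ y1 y2 y3 y4 : Ltr, y1 ≠ lB → p5 lA y1 y2 y3 y4 = 0 := by decide
lemma P5B : ∀ y1 y2 y3 y4 : Ltr, p5 lB y1 y2 y3 y4 = 0 := by decide
lemma P4bTake : ∀ y1 y2 y3 : Ltr, ¬(y1 = la ∧ y2 = lb ∧ y3 = la) → p4 lb y1 y2 y3 = 0 := by
  decide
lemma P4AB : ∀ y2 y3 : Ltr, y2 ≠ lA → p4 lA lB y2 y3 = 0 := by decide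
lemma P5AB : ∀ y2 y3 y4 : Ltr, y2 ≠ lA → p5 lA lB y2 y3 y4 = 0 := by decide
lemma P4ABA : ∀ y3 y4 : Ltr, y3 ≠ lB → p4 lA lB lA y3 = 0 ∧ p4 lB lA y3 y4 = 0 := by decide
lemma P5ABA : ∀ y3 y4 y5 : Ltr, y3 ≠ lB → p5 lA lB lA y3 y4 = 0 := by decide

lemma head_ne {y : Ltr} {t : List Ltr} {z : Ltr} (h : (y :: t).head? ≠ some z) : y ≠ z := by
  simpa using h

lemma mu_consa {l : List Ltr} (h : l.head? ≠ some lb) : mu (la :: l) = mu l := by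
  refine mu_cons_eq_of _ _ (fun y1 y2 y3 t hl => ?_) (fun y1 y2 y3 y4 t hl => ?_) <;>
    subst hl
  · exact P4a _ _ _ (head_ne h)
  · exact P5a _ _ _ _ (head_ne h)

lemma mu_consb {l : List Ltr} (h : l.head? ≠ some la) : mu (lb :: l) = mu l := by
  refine mu_cons_eq_of _ _ (fun y1 y2 y3 t hl => ?_) (fun y1 y2 y3 y4 t hl => ?_) <;>
    subst hl
  · exact P4b _ _ _ (head_ne h)
  · exact P5b _ _ _ _

lemma mu_consA {l : List Ltr} (h : l.head? ≠ some lB) : mu (lA :: l) = mu l := by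
  refine mu_cons_eq_of _ _ (fun y1 y2 y3 t hl => ?_) (fun y1 y2 y3 y4 t hl => ?_) <;>
    subst hl
  · exact P4A _ _ _ (head_ne h)
  · exact P5A _ _ _ _ (head_ne h)

lemma mu_consB {l : List Ltr} (h : l.head? ≠ some lA) : mu (lB :: l) = mu l := by
  refine mu_cons_eq_of _ _ (fun y1 y2 y3 t hl => ?_) (fun y1 y2 y3 y4 t hl => ?_) <;>
    subst hl
  · exact P4B _ _ _ (head_ne h)
  · exact P5B _ _ _ _

lemma mu_consb_take {l : List Ltr} (h : l.take 3 ≠ [la, lb, la]) :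
    mu (lb :: l) = mu l := by
  refine mu_cons_eq_of _ _ (fun y1 y2 y3 t hl => ?_) (fun y1 y2 y3 y4 t hl => ?_) <;>
    subst hl
  · refine P4bTake _ _ _ (fun ⟨e1, e2, e3⟩ => h ?_)
    subst e1; subst e2; subst e3; rfl
  · exact P5b _ _ _ _

lemma mu_AB {r : List Ltr} (h : r.head? ≠ some lA) : mu (lA :: lB :: r) = mu r := by
  have h1 : mu (lA :: lB :: r) = mu (lB :: r) := by
    refine mu_cons_eq_of _ _ (fun y1 y2 y3 t hl => ?_) (fun y1 y2 y3 y4 t hl => ?_) <;>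
      rw [List.cons.injEq] at hl <;> obtain ⟨hy1, hl⟩ := hl <;> subst hy1 <;> subst hl
    · exact P4AB _ _ (head_ne h)
    · exact P5AB _ _ _ (head_ne h)
  rw [h1, mu_consB h]

lemma mu_ABA {r : List Ltr} (h : r.head? ≠ some lB) : mu (lA :: lB :: lA :: r) = mu r := by
  have h1 : mu (lA :: lB :: lA :: r) = mu (lB :: lA :: r) := by
    refine mu_cons_eq_of _ _ (fun y1 y2 y3 t hl => ?_) (fun y1 y2 y3 y4 t hl => ?_) <;>
      rw [List.cons.injEq, List.cons.injEq] at hl <;>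
      obtain ⟨hy1, hy2, hl⟩ := hl <;> subst hy1 <;> subst hy2 <;> subst hl
    · exact (P4ABA _ ((default : Ltr)) (head_ne h)).1
    · exact P5ABA _ _ default (head_ne h)
  have h2 : mu (lB :: lA :: r) = mu (lA :: r) := by
    refine mu_cons_eq_of _ _ (fun y1 y2 y3 t hl => ?_) (fun y1 y2 y3 y4 t hl => ?_) <;>
      rw [List.cons.injEq] at hl <;> obtain ⟨hy1, hl⟩ := hl <;> subst hy1 <;> subst hl
    · exact (P4ABA _ _ (head_ne h)).2
    · exact P5B _ _ _ _
  rw [h1, h2, mu_consA h]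

lemma mu_cons2_le (x y : Ltr) (hx5 : ∀ z1 z2 z3, p5 x y z1 z2 z3 = 0) (t : List Ltr) :
    mu (x :: y :: t) ≤ 1 + mu t := by
  match t with
  | [] => simp
  | [z1] => simp
  | [z1, z2] =>
    rw [show mu [x, y, z1, z2] = p4 x y z1 z2 from mu_four _ _ _ _]
    have := p4_le_one x y z1 z2; omega
  | z1 :: z2 :: z3 :: t' =>
    rw [mu_cons5]
    have h1 : mu (y :: z1 :: z2 :: z3 :: t') ≤ 1 + mu (z1 :: z2 :: z3 :: t') :=
      mu_le_one_add _ _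
    have h2 : mu (z3 :: t') ≤ mu (z2 :: z3 :: t') := mu_le_cons _ _
    have h3 : mu (z2 :: z3 :: t') ≤ mu (z1 :: z2 :: z3 :: t') := mu_le_cons _ _
    have h4 : mu t' ≤ mu (z3 :: t') := mu_le_cons _ _
    have h5 := p4_le_one x y z1 z2
    rw [hx5 z1 z2 z3]
    simp only [max_le_iff]; omega

lemma mu_BA_le (t : List Ltr) : mu (lB :: lA :: t) ≤ 1 + mu t :=
  mu_cons2_le _ _ (fun z1 z2 z3 => P5B _ _ _ _) t

lemma P5ABAB : ∀ z : Ltr, z ≠ lA → p5 lA lB lA lB z = 0 := by decide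
lemma p4ABAB : p4 lA lB lA lB = 1 := by decide
lemma p5ABABA : p5 lA lB lA lB lA = 2 := by decide
lemma p4abab : p4 la lb la lb = 1 := by decide
lemma p5ababa : p5 la lb la lb la = 2 := by decide

lemma mu_ABAB {r : List Ltr} (h : r.head? ≠ some lA) :
    mu (lA :: lB :: lA :: lB :: r) ≤ 1 + mu r := by
  match r with
  | [] => rw [show mu [lA, lB, lA, lB] = p4 lA lB lA lB from mu_four _ _ _ _, p4ABAB]; omega
  | z :: r' =>
    rw [mu_cons5, p4ABAB, P5ABAB z (head_ne h)]
    have h1 : mu (lB :: lA :: lB :: z :: r') ≤ 1 + mu (lB :: z :: r') :=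
      mu_BA_le _
    have h2 : mu (lB :: z :: r') = mu (z :: r') := mu_consB h
    have h3 : mu r' ≤ mu (z :: r') := mu_le_cons _ _
    simp only [max_le_iff]; omega

lemma mu_ABABA (r : List Ltr) : mu (lA :: lB :: lA :: lB :: lA :: r) ≤ 2 + mu r := by
  rw [mu_cons5, p4ABAB, p5ABABA]
  have h1 : mu (lB :: lA :: lB :: lA :: r) ≤ 1 + mu (lB :: lA :: r) := mu_BA_le _
  have h2 : mu (lB :: lA :: r) ≤ 1 + mu r := mu_BA_le _
  have h3 : mu (lA :: r) ≤ 1 + mu r := mu_le_one_add _ _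
  simp only [max_le_iff]; omega

lemma mu_ge_ababa (t : List Ltr) : 2 + mu t ≤ mu (la :: lb :: la :: lb :: la :: t) := by
  have := mu_ge_p5 la lb la lb la t; rw [p5ababa] at this; exact this

lemma mu_ge_abab (t : List Ltr) : 1 + mu t ≤ mu (la :: lb :: la :: lb :: t) := by
  have := mu_ge_p4 la lb la lb t; rw [p4abab] at this; exact this

/-! ### push: left multiplication by a letter on reduced words -/

def push (x : Ltr) : List Ltr → List Ltr
  | [] => [x]
  | y :: t => if x.1 = y.1 ∧ x.2 = !y.2 then t else x :: y :: t

@[simp] lemma push_nil (x : Ltr) : push x [] = [x] := rfl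

lemma push_a_cancel (t : List Ltr) : push la (lA :: t) = t := by simp [push, la, lA]
lemma push_b_cancel (t : List Ltr) : push lb (lB :: t) = t := by simp [push, lb, lB]
lemma push_A_cancel (t : List Ltr) : push lA (la :: t) = t := by simp [push, la, lA]
lemma push_B_cancel (t : List Ltr) : push lB (lb :: t) = t := by simp [push, lb, lB]

lemma push_a_keep {y : Ltr} (t : List Ltr) (h : y ≠ lA) :
    push la (y :: t) = la :: y :: t := by
  obtain ⟨y1, y2⟩ := y
  cases y1 <;> cases y2 <;> simp_all [push, la, lA]
lemma push_b_keep {y : Ltr} (t : List Ltr) (h : y ≠ lB) :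
    push lb (y :: t) = lb :: y :: t := by
  obtain ⟨y1, y2⟩ := y
  cases y1 <;> cases y2 <;> simp_all [push, lb, lB]
lemma push_A_keep {y : Ltr} (t : List Ltr) (h : y ≠ la) :
    push lA (y :: t) = lA :: y :: t := by
  obtain ⟨y1, y2⟩ := y
  cases y1 <;> cases y2 <;> simp_all [push, la, lA]
lemma push_B_keep {y : Ltr} (t : List Ltr) (h : y ≠ lb) :
    push lB (y :: t) = lB :: y :: t := by
  obtain ⟨y1, y2⟩ := y
  cases y1 <;> cases y2 <;> simp_all [push, lb, lB]

/-! ### the length functional -/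

def FF (l : List Ltr) : ℤ := (l.length : ℤ) - 2 * (mu l : ℤ)

lemma Fpush_le (x : Ltr) (l : List Ltr) : FF (push x l) ≤ FF l + 1 := by
  cases l with
  | nil => simp [push, FF]
  | cons y t =>
    by_cases hc : x.1 = y.1 ∧ x.2 = !y.2
    · have hp : push x (y :: t) = t := by simp [push, hc]
      rw [hp]
      have := mu_le_one_add y t
      have := mu_le_cons y t
      simp only [FF, List.length_cons]
      push_cast
      omega
    · have hp : push x (y :: t) = x :: y :: t := by simp [push, hc]
      rw [hp]
      have := mu_le_one_add x (y :: t)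
      have := mu_le_cons x (y :: t)
      simp only [FF, List.length_cons]
      push_cast
      omega

/-- the key inequality for the long generator `w = ababa` -/
lemma Fw (l : List Ltr) :
    FF (push la (push lb (push la (push lb (push la l))))) ≤ FF l + 1 := by
  rcases l with _ | ⟨y1, r1⟩
  · -- l = []
    have h2 : mu [la, lb, la, lb, la] = 2 := by
      rw [mu_cons5, mu_four]
      simp only [mu_one, mu_nil]
      decide
    simp only [push_nil, push_b_keep _ (by decide : la ≠ lB),
      push_a_keep _ (by decide : lb ≠ lA), FF, h2]
    simp
  by_cases hy1 : y1 = lA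
  case neg =>
    -- no cancellation at all: result is ababa ++ l
    rw [push_a_keep _ hy1, push_b_keep _ (by decide : la ≠ lB),
      push_a_keep _ (by decide : lb ≠ lA), push_b_keep _ (by decide : la ≠ lB),
      push_a_keep _ (by decide : lb ≠ lA)]
    have := mu_ge_ababa (y1 :: r1)
    simp only [FF, List.length_cons]
    push_cast
    omega
  subst hy1
  rw [push_a_cancel]
  by_cases hy2 : r1.head? = some lB
  case neg =>
    -- result abab ++ r1
    have hp : push lb r1 = lb :: r1 := by
      rcases r1 with _ | ⟨z, r⟩
      · rfl
      · exact push_b_keep _ (by simpa using hy2)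
    rw [hp, push_a_keep _ (by decide : lb ≠ lA), push_b_keep _ (by decide : la ≠ lB),
      push_a_keep _ (by decide : lb ≠ lA)]
    have h1 := mu_ge_abab r1
    have h2 : mu (lA :: r1) = mu r1 := mu_consA hy2
    simp only [FF, List.length_cons]
    push_cast
    omega
  obtain ⟨r2, rfl⟩ : ∃ r2, r1 = lB :: r2 := by
    rcases r1 with _ | ⟨z, r⟩ <;> simp_all
  rw [push_b_cancel]
  by_cases hy3 : r2.head? = some lA
  case neg =>
    -- result aba ++ r2
    have hp : push la r2 = la :: r2 := by
      rcases r2 with _ | ⟨z, r⟩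
      · rfl
      · exact push_a_keep _ (by simpa using hy3)
    rw [hp, push_b_keep _ (by decide : la ≠ lB), push_a_keep _ (by decide : lb ≠ lA)]
    have h2 : mu (lA :: lB :: r2) = mu r2 := mu_AB hy3
    have h3 : mu r2 ≤ mu (la :: lb :: la :: r2) :=
      le_trans (mu_le_cons la r2) (le_trans (mu_le_cons lb _) (mu_le_cons la _))
    simp only [FF, List.length_cons]
    push_cast
    omega
  obtain ⟨r3, rfl⟩ : ∃ r3, r2 = lA :: r3 := by
    rcases r2 with _ | ⟨z, r⟩ <;> simp_all
  rw [push_a_cancel]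
  by_cases hy4 : r3.head? = some lB
  case neg =>
    -- result ab ++ r3
    have hp : push lb r3 = lb :: r3 := by
      rcases r3 with _ | ⟨z, r⟩
      · rfl
      · exact push_b_keep _ (by simpa using hy4)
    rw [hp, push_a_keep _ (by decide : lb ≠ lA)]
    have h2 : mu (lA :: lB :: lA :: r3) = mu r3 := mu_ABA hy4
    have h3 : mu r3 ≤ mu (la :: lb :: r3) :=
      le_trans (mu_le_cons lb r3) (mu_le_cons la _)
    simp only [FF, List.length_cons]
    push_cast
    omega
  obtain ⟨r4, rfl⟩ : ∃ r4, r3 = lB :: r4 := by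
    rcases r3 with _ | ⟨z, r⟩ <;> simp_all
  rw [push_b_cancel]
  by_cases hy5 : r4.head? = some lA
  case neg =>
    -- result la :: r4
    have hp : push la r4 = la :: r4 := by
      rcases r4 with _ | ⟨z, r⟩
      · rfl
      · exact push_a_keep _ (by simpa using hy5)
    rw [hp]
    have h2 : mu (lA :: lB :: lA :: lB :: r4) ≤ 1 + mu r4 := mu_ABAB hy5
    have h3 : mu r4 ≤ mu (la :: r4) := mu_le_cons la r4
    simp only [FF, List.length_cons]
    push_cast
    omega
  obtain ⟨r5, rfl⟩ : ∃ r5, r4 = lA :: r5 := by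
    rcases r4 with _ | ⟨z, r⟩ <;> simp_all
  rw [push_a_cancel]
  have h2 : mu (lA :: lB :: lA :: lB :: lA :: r5) ≤ 2 + mu r5 := mu_ABABA r5
  simp only [FF, List.length_cons]
  push_cast
  omega

/-! ### sign-flip symmetry -/

def fl (x : Ltr) : Ltr := (x.1, !x.2)

lemma p4_flip : ∀ x1 x2 x3 x4 : Ltr,
    p4 (fl x1) (fl x2) (fl x3) (fl x4) = p4 x1 x2 x3 x4 := by decide
lemma p5_flip : ∀ x1 x2 x3 x4 x5 : Ltr,
    p5 (fl x1) (fl x2) (fl x3) (fl x4) (fl x5) = p5 x1 x2 x3 x4 x5 := by decide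

lemma mu_flip : ∀ l : List Ltr, mu (l.map fl) = mu l
  | [] => by simp
  | [x] => by simp
  | [x, y] => by simp
  | [x, y, z] => by simp
  | [x1, x2, x3, x4] => by
      simp only [List.map_cons, List.map_nil]
      rw [mu_four, mu_four, p4_flip]
  | x1 :: x2 :: x3 :: x4 :: x5 :: t => by
      have h1 := mu_flip (x2 :: x3 :: x4 :: x5 :: t)
      have h2 := mu_flip (x5 :: t)
      have h3 := mu_flip t
      simp only [List.map_cons] at h1 h2 ⊢
      rw [mu_cons5, mu_cons5, p4_flip, p5_flip, h1, h2, h3]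
termination_by l => l.length

lemma fl_fl (x : Ltr) : fl (fl x) = x := by obtain ⟨a, s⟩ := x; cases s <;> rfl

lemma map_fl_fl (l : List Ltr) : (l.map fl).map fl = l := by
  simp [List.map_map, Function.comp_def, fl_fl]

lemma push_flip (x : Ltr) (l : List Ltr) :
    push (fl x) (l.map fl) = (push x l).map fl := by
  cases l with
  | nil => rfl
  | cons y t =>
    obtain ⟨x1, x2⟩ := x; obtain ⟨y1, y2⟩ := y
    by_cases h : x1 = y1
    · subst h; cases x2 <;> cases y2 <;> simp [push, fl]
    · cases x2 <;> cases y2 <;> simp [push, fl, h]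

lemma FF_flip (l : List Ltr) : FF (l.map fl) = FF l := by
  simp [FF, mu_flip]

/-- the key inequality for the long generator `w⁻¹` -/
lemma FW (l : List Ltr) :
    FF (push lA (push lB (push lA (push lB (push lA l))))) ≤ FF l + 1 := by
  have hla : lA = fl la := rfl
  have hlb : lB = fl lb := rfl
  have key := Fw (l.map fl)
  rw [hla, hlb]
  rw [show l = (l.map fl).map fl from (map_fl_fl l).symm]
  rw [push_flip, push_flip, push_flip, push_flip, push_flip]
  rw [FF_flip, FF_flip]
  exact key

/-! ### the final combinatorial contradiction -/

lemma main_list (l : List Ltr) :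
    ¬ (FF (push lA l) = FF l - 1 ∧ FF (push lA (push lA l)) = FF l - 2 ∧
       FF (push lb l) = FF l - 1) := by
  rintro ⟨h1, h2, h3⟩
  rcases l with _ | ⟨y, t⟩
  · simp [push, FF] at h3
  by_cases hy : y = lB
  · -- Case I : word starts with B
    subst hy
    rw [push_A_keep _ (by decide : lB ≠ la)] at h1 h2
    rw [push_A_keep _ (by decide : lA ≠ la)] at h2
    have e1 : mu (lA :: lB :: t) = mu (lB :: t) + 1 := by
      simp only [FF, List.length_cons] at h1; push_cast at h1; omega
    have e2 : mu (lA :: lA :: lB :: t) = mu (lB :: t) + 2 := by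
      simp only [FF, List.length_cons] at h2; push_cast at h2; omega
    have e3 : mu (lA :: lA :: lB :: t) = mu (lA :: lB :: t) :=
      mu_consA (by simp [lA, lB])
    omega
  · -- Case II : the b⁻¹-condition forces the word to start with a,b,a
    rw [push_b_keep _ (fun h => hy (by simpa using h))] at h3
    have e3 : mu (lb :: y :: t) = mu (y :: t) + 1 := by
      simp only [FF, List.length_cons] at h3; push_cast at h3; omega
    have htake : (y :: t).take 3 = [la, lb, la] := by
      by_contra hne
      rw [mu_consb_take hne] at e3
      omega
    obtain ⟨t2, rfl, rfl⟩ : ∃ t2, y = la ∧ t = lb :: la :: t2 := by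
      rcases t with _ | ⟨z1, _ | ⟨z2, t2⟩⟩ <;> simp_all
      try exact ⟨t2, rfl⟩
    rw [push_A_cancel] at h1 h2
    rw [push_A_keep _ (by decide : lb ≠ la)] at h2
    have e1 : mu (lb :: la :: t2) = mu (la :: lb :: la :: t2) := by
      simp only [FF, List.length_cons] at h1; push_cast at h1; omega
    have e2 : mu (lA :: lb :: la :: t2) = mu (la :: lb :: la :: t2) + 1 := by
      simp only [FF, List.length_cons] at h2; push_cast at h2; omega
    have e4 : mu (lA :: lb :: la :: t2) = mu (lb :: la :: t2) :=
      mu_consA (by simp [lb, lB])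
    omega

/-! ### Bridge to the free group -/

lemma push_reduce (x : Ltr) (L : List Ltr) :
    FreeGroup.reduce (x :: L) = push x (FreeGroup.reduce L) := by
  rw [FreeGroup.reduce.cons]
  cases h : FreeGroup.reduce L with
  | nil => rfl
  | cons hd tl => rfl

lemma toWord_cons_mul (x : Ltr) (g : F2) :
    (FreeGroup.mk [x] * g).toWord = push x g.toWord := by
  conv_lhs => rw [← FreeGroup.mk_toWord (x := g)]
  rw [FreeGroup.mul_mk, List.singleton_append, FreeGroup.toWord_mk, push_reduce,
    FreeGroup.reduce_toWord]

lemma mk_cons (x : Ltr) (L : List Ltr) :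
    FreeGroup.mk (x :: L) = FreeGroup.mk [x] * FreeGroup.mk L := by
  rw [FreeGroup.mul_mk]; rfl

lemma toWord_mkl_mul : ∀ (L : List Ltr) (g : F2),
    (FreeGroup.mk L * g).toWord = L.foldr push g.toWord
  | [], g => by rw [← FreeGroup.one_eq_mk, one_mul]; rfl
  | x :: L, g => by
    rw [mk_cons, mul_assoc, toWord_cons_mul, toWord_mkl_mul L g]; rfl

open F2Gen in
lemma a_mk : a = FreeGroup.mk [la] := rfl
open F2Gen in
lemma b_mk : b = FreeGroup.mk [lb] := rfl
open F2Gen in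
lemma ainv_mk : a⁻¹ = FreeGroup.mk [lA] := by
  rw [a_mk, FreeGroup.inv_mk]; rfl
open F2Gen in
lemma binv_mk : b⁻¹ = FreeGroup.mk [lB] := by
  rw [b_mk, FreeGroup.inv_mk]; rfl
lemma w_mk : wγ = FreeGroup.mk [la, lb, la, lb, la] := by
  rw [wγ, a_mk, b_mk]; simp [FreeGroup.mul_mk]
lemma winv_mk : wγ⁻¹ = FreeGroup.mk [lA, lB, lA, lB, lA] := by
  rw [w_mk, FreeGroup.inv_mk]; rfl

open F2Gen in
lemma id_abab : wγ * a⁻¹ = FreeGroup.mk [la, lb, la, lb] := by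
  rw [w_mk, ainv_mk, FreeGroup.mul_mk]
  apply FreeGroup.toWord_injective
  rw [FreeGroup.toWord_mk, FreeGroup.toWord_mk]
  decide
open F2Gen in
lemma id_baba : a⁻¹ * wγ = FreeGroup.mk [lb, la, lb, la] := by
  rw [w_mk, ainv_mk, FreeGroup.mul_mk]
  apply FreeGroup.toWord_injective
  rw [FreeGroup.toWord_mk, FreeGroup.toWord_mk]
  decide
open F2Gen in
lemma id_ABAB : wγ⁻¹ * a = FreeGroup.mk [lA, lB, lA, lB] := by
  rw [winv_mk, a_mk, FreeGroup.mul_mk]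
  apply FreeGroup.toWord_injective
  rw [FreeGroup.toWord_mk, FreeGroup.toWord_mk]
  decide
open F2Gen in
lemma id_BABA : a * wγ⁻¹ = FreeGroup.mk [lB, lA, lB, lA] := by
  rw [winv_mk, a_mk, FreeGroup.mul_mk]
  apply FreeGroup.toWord_injective
  rw [FreeGroup.toWord_mk, FreeGroup.toWord_mk]
  decide

/-! ### wlen infrastructure -/

lemma wlen_le_spell {g : F2} {L : List F2} (hm : ∀ x ∈ L, x ∈ Sγ) (hp : L.prod = g) :
    wlen Sγ g ≤ L.length :=
  Nat.sInf_le ⟨L, hm, rfl, hp⟩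

lemma mem_single (x : Ltr) : FreeGroup.mk [x] ∈ Sγ := by
  rcases x with ⟨b1, b2⟩
  cases b1 <;> cases b2
  · rw [show ((false, false) : Ltr) = lB from rfl, ← binv_mk];
    simp [Sγ]
  · rw [show ((false, true) : Ltr) = lb from rfl, ← b_mk]; simp [Sγ]
  · rw [show ((true, false) : Ltr) = lA from rfl, ← ainv_mk]; simp [Sγ]
  · rw [show ((true, true) : Ltr) = la from rfl, ← a_mk]; simp [Sγ]

lemma prod_map_mk : ∀ lw : List Ltr,
    ((lw.map fun x => FreeGroup.mk [x]).prod) = FreeGroup.mk lw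
  | [] => by rw [List.map_nil, List.prod_nil, FreeGroup.one_eq_mk]
  | x :: t => by
    rw [List.map_cons, List.prod_cons, prod_map_mk t, ← mk_cons]

lemma wlen_mk_le_len (lw : List Ltr) : wlen Sγ (FreeGroup.mk lw) ≤ lw.length := by
  have := wlen_le_spell (L := lw.map fun x => FreeGroup.mk [x])
    (fun x hx => by obtain ⟨p, _, rfl⟩ := List.mem_map.mp hx; exact mem_single p)
    (prod_map_mk lw)
  simpa using this

lemma exists_geodesic (g : F2) :
    ∃ L : List F2, (∀ x ∈ L, x ∈ Sγ) ∧ L.length = wlen Sγ g ∧ L.prod = g := by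
  have hne : {n | ∃ l : List F2, (∀ x ∈ l, x ∈ Sγ) ∧ l.length = n ∧ l.prod = g}.Nonempty := by
    refine ⟨(g.toWord.map fun x => FreeGroup.mk [x]).length,
      g.toWord.map fun x => FreeGroup.mk [x], ?_, rfl, ?_⟩
    · intro x hx; obtain ⟨p, _, rfl⟩ := List.mem_map.mp hx; exact mem_single p
    · rw [prod_map_mk, FreeGroup.mk_toWord]
  have := Nat.sInf_mem hne
  obtain ⟨L, hm, hl, hp⟩ := this
  exact ⟨L, hm, hl, hp⟩

lemma wlen_mul_le (g h : F2) : wlen Sγ (g * h) ≤ wlen Sγ g + wlen Sγ h := by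
  obtain ⟨L1, hm1, hl1, hp1⟩ := exists_geodesic g
  obtain ⟨L2, hm2, hl2, hp2⟩ := exists_geodesic h
  have := wlen_le_spell (L := L1 ++ L2)
    (fun x hx => by rcases List.mem_append.mp hx with h | h; exacts [hm1 x h, hm2 x h])
    (by rw [List.prod_append, hp1, hp2])
  simpa [hl1, hl2] using this

lemma wlen_single {s : F2} (hs : s ∈ Sγ) : wlen Sγ s ≤ 1 := by
  have h : wlen Sγ s ≤ ([s] : List F2).length :=
    wlen_le_spell (by simpa using hs) (by simp)
  simpa using h

lemma p5_le_two (x1 x2 x3 x4 x5 : Ltr) : p5 x1 x2 x3 x4 x5 ≤ 2 := by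
  unfold p5; split <;> simp

open F2Gen in
lemma wlen_pat4 {x1 x2 x3 x4 : Ltr} (h : p4 x1 x2 x3 x4 = 1) :
    wlen Sγ (FreeGroup.mk [x1, x2, x3, x4]) ≤ 2 := by
  unfold p4 at h
  split at h
  case isFalse => omega
  rename_i hc
  have hmem : ∀ (u v : F2), u ∈ Sγ → v ∈ Sγ → wlen Sγ (u * v) ≤ 2 := by
    intro u v hu hv
    have := wlen_mul_le u v
    have := wlen_single hu
    have := wlen_single hv
    omega
  rcases hc with hc | hc | hc | hc <;>
    (simp only [List.cons.injEq, and_true] at hc;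
     obtain ⟨e1, e2, e3, e4⟩ := hc; subst e1; subst e2; subst e3; subst e4)
  · rw [← id_abab]; exact hmem _ _ (by simp [Sγ]) (by simp [Sγ])
  · rw [← id_baba]; exact hmem _ _ (by simp [Sγ]) (by simp [Sγ])
  · rw [← id_ABAB]; exact hmem _ _ (by simp [Sγ]) (by simp [Sγ])
  · rw [← id_BABA]; exact hmem _ _ (by simp [Sγ]) (by simp [Sγ])

lemma wlen_pat5 {x1 x2 x3 x4 x5 : Ltr} (h : p5 x1 x2 x3 x4 x5 = 2) :
    wlen Sγ (FreeGroup.mk [x1, x2, x3, x4, x5]) ≤ 1 := by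
  unfold p5 at h
  split at h
  case isFalse => omega
  rename_i hc
  rcases hc with hc | hc <;>
    (simp only [List.cons.injEq, and_true] at hc;
     obtain ⟨e1, e2, e3, e4, e5⟩ := hc; subst e1; subst e2; subst e3; subst e4; subst e5)
  · rw [← w_mk]; exact wlen_single (by simp [Sγ])
  · rw [← winv_mk]; exact wlen_single (by simp [Sγ])

/-- upper bound: `wlen ≤ length − 2 μ` -/
lemma wlen_upper : ∀ n (lw : List Ltr), lw.length ≤ n →
    wlen Sγ (FreeGroup.mk lw) + 2 * mu lw ≤ lw.length := by
  intro n
  induction n with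
  | zero =>
    intro lw h
    have : lw = [] := List.length_eq_zero_iff.mp (by omega)
    subst this
    simpa using wlen_mk_le_len []
  | succ n ih =>
    intro lw hlen
    match lw with
    | [] => simpa using wlen_mk_le_len []
    | [x] => simpa using wlen_mk_le_len [x]
    | [x, y] => simpa using wlen_mk_le_len [x, y]
    | [x, y, z] => simpa using wlen_mk_le_len [x, y, z]
    | [x1, x2, x3, x4] =>
      rw [mu_four]
      simp only [List.length_cons, List.length_nil]
      have hp := p4_le_one x1 x2 x3 x4
      by_cases h4 : p4 x1 x2 x3 x4 = 1
      · have := wlen_pat4 h4; omega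
      · have h0 : p4 x1 x2 x3 x4 = 0 := by omega
        have := wlen_mk_le_len [x1, x2, x3, x4]
        simp only [List.length_cons, List.length_nil] at this
        omega
    | x1 :: x2 :: x3 :: x4 :: x5 :: t =>
      rw [mu_cons5]
      have hlen1 : (x2 :: x3 :: x4 :: x5 :: t).length ≤ n := by
        simp only [List.length_cons] at hlen ⊢; omega
      have hlen2 : (x5 :: t).length ≤ n := by
        simp only [List.length_cons] at hlen ⊢; omega
      have hlen3 : t.length ≤ n := by
        simp only [List.length_cons] at hlen ⊢; omega
      have ih1 := ih _ hlen1
      have ih2 := ih _ hlen2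
      have ih3 := ih _ hlen3
      have split1 : FreeGroup.mk (x1 :: x2 :: x3 :: x4 :: x5 :: t) =
          FreeGroup.mk [x1] * FreeGroup.mk (x2 :: x3 :: x4 :: x5 :: t) := mk_cons _ _
      have split2 : FreeGroup.mk (x1 :: x2 :: x3 :: x4 :: x5 :: t) =
          FreeGroup.mk [x1, x2, x3, x4] * FreeGroup.mk (x5 :: t) := by
        rw [FreeGroup.mul_mk]; rfl
      have split3 : FreeGroup.mk (x1 :: x2 :: x3 :: x4 :: x5 :: t) =
          FreeGroup.mk [x1, x2, x3, x4, x5] * FreeGroup.mk t := by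
        rw [FreeGroup.mul_mk]; rfl
      have opt1 : wlen Sγ (FreeGroup.mk (x1 :: x2 :: x3 :: x4 :: x5 :: t)) +
          2 * mu (x2 :: x3 :: x4 :: x5 :: t) ≤ (x1 :: x2 :: x3 :: x4 :: x5 :: t).length := by
        have h1 := wlen_mul_le (FreeGroup.mk [x1]) (FreeGroup.mk (x2 :: x3 :: x4 :: x5 :: t))
        rw [← split1] at h1
        have h2 := wlen_single (mem_single x1)
        simp only [List.length_cons] at ih1 ⊢
        omega
      have opt2 : wlen Sγ (FreeGroup.mk (x1 :: x2 :: x3 :: x4 :: x5 :: t)) +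
          2 * (p4 x1 x2 x3 x4 + mu (x5 :: t)) ≤ (x1 :: x2 :: x3 :: x4 :: x5 :: t).length := by
        have h1 := wlen_mul_le (FreeGroup.mk [x1, x2, x3, x4]) (FreeGroup.mk (x5 :: t))
        rw [← split2] at h1
        have hp := p4_le_one x1 x2 x3 x4
        have h2 : wlen Sγ (FreeGroup.mk [x1, x2, x3, x4]) + 2 * p4 x1 x2 x3 x4 ≤ 4 := by
          by_cases h4 : p4 x1 x2 x3 x4 = 1
          · have := wlen_pat4 h4; omega
          · have h0 : p4 x1 x2 x3 x4 = 0 := by omega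
            have := wlen_mk_le_len [x1, x2, x3, x4]
            simp only [List.length_cons, List.length_nil] at this
            omega
        simp only [List.length_cons] at ih2 ⊢
        omega
      have opt3 : wlen Sγ (FreeGroup.mk (x1 :: x2 :: x3 :: x4 :: x5 :: t)) +
          2 * (p5 x1 x2 x3 x4 x5 + mu t) ≤ (x1 :: x2 :: x3 :: x4 :: x5 :: t).length := by
        have h1 := wlen_mul_le (FreeGroup.mk [x1, x2, x3, x4, x5]) (FreeGroup.mk t)
        rw [← split3] at h1
        have hp := p5_le_two x1 x2 x3 x4 x5
        have h2 : wlen Sγ (FreeGroup.mk [x1, x2, x3, x4, x5]) + 2 * p5 x1 x2 x3 x4 x5 ≤ 5 := by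
          have hcases : p5 x1 x2 x3 x4 x5 = 0 ∨ p5 x1 x2 x3 x4 x5 = 2 := by
            unfold p5; split <;> simp
          rcases hcases with h5 | h5
          · have := wlen_mk_le_len [x1, x2, x3, x4, x5]
            simp only [List.length_cons, List.length_nil] at this
            rw [h5]; omega
          · have := wlen_pat5 h5; rw [h5]; omega
        simp only [List.length_cons] at ih3 ⊢
        omega
      rcases max_choice (mu (x2 :: x3 :: x4 :: x5 :: t))
        (max (p4 x1 x2 x3 x4 + mu (x5 :: t)) (p5 x1 x2 x3 x4 x5 + mu t)) with hm | hm
      · rw [hm]; exact opt1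
      · rw [hm]
        rcases max_choice (p4 x1 x2 x3 x4 + mu (x5 :: t)) (p5 x1 x2 x3 x4 x5 + mu t) with
          hm2 | hm2
        · rw [hm2]; exact opt2
        · rw [hm2]; exact opt3

open F2Gen in
/-- lower bound along any spelling -/
lemma FF_spell : ∀ L : List F2, (∀ x ∈ L, x ∈ Sγ) → FF (L.prod).toWord ≤ (L.length : ℤ) := by
  intro L
  induction L with
  | nil => intro _; simp [FF]
  | cons s L ih =>
    intro hm
    have hs : s ∈ Sγ := hm s (by simp)
    have hL : ∀ x ∈ L, x ∈ Sγ := fun x hx => hm x (by simp [hx])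
    have ihL := ih hL
    rw [List.prod_cons]
    have step : FF ((s * L.prod)).toWord ≤ FF (L.prod).toWord + 1 := by
      have hs' : s = a ∨ s = a⁻¹ ∨ s = b ∨ s = b⁻¹ ∨ s = wγ ∨ s = wγ⁻¹ := by
        simpa [Sγ] using hs
      rcases hs' with rfl | rfl | rfl | rfl | rfl | rfl
      · rw [a_mk, toWord_cons_mul]; exact Fpush_le _ _
      · rw [ainv_mk, toWord_cons_mul]; exact Fpush_le _ _
      · rw [b_mk, toWord_cons_mul]; exact Fpush_le _ _
      · rw [binv_mk, toWord_cons_mul]; exact Fpush_le _ _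
      · rw [w_mk, toWord_mkl_mul]; exact Fw _
      · rw [winv_mk, toWord_mkl_mul]; exact FW _
    simp only [List.length_cons]
    push_cast
    omega

/-- the distance formula -/
theorem wlen_eq_FF (g : F2) : (wlen Sγ g : ℤ) = FF g.toWord := by
  have hup := wlen_upper g.toWord.length g.toWord le_rfl
  rw [FreeGroup.mk_toWord] at hup
  have hlo : FF g.toWord ≤ (wlen Sγ g : ℤ) := by
    obtain ⟨L, hmm, hl, hp⟩ := exists_geodesic g
    have := FF_spell L hmm
    rw [hp, hl] at this
    exact this
  refine le_antisymm ?_ hlo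
  simp only [FF]
  push_cast at hup ⊢
  omega

open F2Gen in
lemma part1 (g : F2) :
    ¬ ((∃ l : List F2, (∀ x ∈ l, x ∈ Sγ) ∧ l.prod = g ∧
        l.length = wlen Sγ g ∧ l.take 2 = [a, a]) ∧
      (∃ l' : List F2, (∀ x ∈ l', x ∈ Sγ) ∧ l'.prod = g ∧
        l'.length = wlen Sγ g ∧ l'.head? = some b⁻¹)) := by
  rintro ⟨⟨L, hLm, hLp, hLl, hLt⟩, ⟨L', hL'm, hL'p, hL'l, hL'h⟩⟩
  obtain ⟨M, rfl⟩ : ∃ M, L = a :: a :: M := by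
    rcases L with _ | ⟨s1, _ | ⟨s2, M⟩⟩ <;> simp_all
  obtain ⟨M', rfl⟩ : ∃ M', L' = b⁻¹ :: M' := by
    rcases L' with _ | ⟨s, M'⟩ <;> simp_all
  simp only [List.prod_cons] at hLp hL'p
  simp only [List.length_cons] at hLl hL'l
  set n := wlen Sγ g with hn
  -- basic membership facts
  have haS : a ∈ Sγ := by simp [Sγ]
  have haiS : a⁻¹ ∈ Sγ := by simp [Sγ]
  have hbS : b ∈ Sγ := by simp [Sγ]
  have hMm : ∀ x ∈ M, x ∈ Sγ := fun x hx => hLm x (by simp [hx])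
  have hM'm : ∀ x ∈ M', x ∈ Sγ := fun x hx => hL'm x (by simp [hx])
  -- group identities
  have e1 : a⁻¹ * g = a * M.prod := by rw [← hLp]; group
  have e2 : a⁻¹ * (a⁻¹ * g) = M.prod := by rw [← hLp]; group
  have e3 : b * g = M'.prod := by rw [← hL'p]; group
  -- wlen equalities
  have w1 : wlen Sγ (a⁻¹ * g) = M.length + 1 := by
    have hle : wlen Sγ (a⁻¹ * g) ≤ M.length + 1 := by
      have h : wlen Sγ (a⁻¹ * g) ≤ (a :: M).length :=
        wlen_le_spell
          (fun x hx => by rcases List.mem_cons.mp hx with rfl | hx; exacts [haS, hMm x hx])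
          (by rw [List.prod_cons, e1])
      simpa using h
    have hge : n ≤ 1 + wlen Sγ (a⁻¹ * g) := by
      have h := wlen_mul_le a (a⁻¹ * g)
      rw [show a * (a⁻¹ * g) = g from by group] at h
      have := wlen_single haS
      omega
    omega
  have w2 : wlen Sγ (a⁻¹ * (a⁻¹ * g)) = M.length := by
    have hle : wlen Sγ (a⁻¹ * (a⁻¹ * g)) ≤ M.length := by
      rw [e2]; exact wlen_le_spell hMm rfl
    have hge : wlen Sγ (a⁻¹ * g) ≤ 1 + wlen Sγ (a⁻¹ * (a⁻¹ * g)) := by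
      have h := wlen_mul_le a (a⁻¹ * (a⁻¹ * g))
      rw [show a * (a⁻¹ * (a⁻¹ * g)) = a⁻¹ * g from by group] at h
      have := wlen_single haS
      omega
    omega
  have w3 : wlen Sγ (b * g) = M'.length := by
    have hle : wlen Sγ (b * g) ≤ M'.length := by
      rw [e3]; exact wlen_le_spell hM'm rfl
    have hge : n ≤ 1 + wlen Sγ (b * g) := by
      have h := wlen_mul_le b⁻¹ (b * g)
      rw [show b⁻¹ * (b * g) = g from by group] at h
      have := wlen_single (by simp [Sγ] : (b⁻¹ : F2) ∈ Sγ)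
      omega
    omega
  -- convert to FF equalities
  have t1 : (a⁻¹ * g).toWord = push lA g.toWord := by rw [ainv_mk, toWord_cons_mul]
  have t2 : (a⁻¹ * (a⁻¹ * g)).toWord = push lA (push lA g.toWord) := by
    rw [ainv_mk, toWord_cons_mul, ← ainv_mk, t1]
  have t3 : (b * g).toWord = push lb g.toWord := by rw [b_mk, toWord_cons_mul]
  have F0 := wlen_eq_FF g
  have F1 := wlen_eq_FF (a⁻¹ * g)
  have F2' := wlen_eq_FF (a⁻¹ * (a⁻¹ * g))
  have F3 := wlen_eq_FF (b * g)
  rw [t1, w1] at F1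
  rw [t2, w2] at F2'
  rw [t3, w3] at F3
  rw [← hn] at F0
  refine main_list g.toWord ⟨?_, ?_, ?_⟩
  · rw [← F1, ← F0]; push_cast; omega
  · rw [← F2', ← F0]; push_cast; omega
  · rw [← F3, ← F0]; push_cast; omega

open F2Gen in
lemma part2 (g : F2) :
    ¬ ((∃ l : List F2, (∀ x ∈ l, x ∈ Sγ) ∧ l.prod = g ∧
        l.length = wlen Sγ g ∧ l.take 2 = [a⁻¹, a⁻¹]) ∧
      (∃ l' : List F2, (∀ x ∈ l', x ∈ Sγ) ∧ l'.prod = g ∧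
        l'.length = wlen Sγ g ∧ l'.head? = some b)) := by
  rintro ⟨⟨L, hLm, hLp, hLl, hLt⟩, ⟨L', hL'm, hL'p, hL'l, hL'h⟩⟩
  obtain ⟨M, rfl⟩ : ∃ M, L = a⁻¹ :: a⁻¹ :: M := by
    rcases L with _ | ⟨s1, _ | ⟨s2, M⟩⟩ <;> simp_all
  obtain ⟨M', rfl⟩ : ∃ M', L' = b :: M' := by
    rcases L' with _ | ⟨s, M'⟩ <;> simp_all
  simp only [List.prod_cons] at hLp hL'p
  simp only [List.length_cons] at hLl hL'l
  set n := wlen Sγ g with hn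
  have haS : a ∈ Sγ := by simp [Sγ]
  have haiS : a⁻¹ ∈ Sγ := by simp [Sγ]
  have hbiS : b⁻¹ ∈ Sγ := by simp [Sγ]
  have hMm : ∀ x ∈ M, x ∈ Sγ := fun x hx => hLm x (by simp [hx])
  have hM'm : ∀ x ∈ M', x ∈ Sγ := fun x hx => hL'm x (by simp [hx])
  have e1 : a * g = a⁻¹ * M.prod := by rw [← hLp]; group
  have e2 : a * (a * g) = M.prod := by rw [← hLp]; group
  have e3 : b⁻¹ * g = M'.prod := by rw [← hL'p]; group
  have w1 : wlen Sγ (a * g) = M.length + 1 := by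
    have hle : wlen Sγ (a * g) ≤ M.length + 1 := by
      have h : wlen Sγ (a * g) ≤ (a⁻¹ :: M).length :=
        wlen_le_spell
          (fun x hx => by rcases List.mem_cons.mp hx with rfl | hx; exacts [haiS, hMm x hx])
          (by rw [List.prod_cons, e1])
      simpa using h
    have hge : n ≤ 1 + wlen Sγ (a * g) := by
      have h := wlen_mul_le a⁻¹ (a * g)
      rw [show a⁻¹ * (a * g) = g from by group] at h
      have := wlen_single haiS
      omega
    omega
  have w2 : wlen Sγ (a * (a * g)) = M.length := by
    have hle : wlen Sγ (a * (a * g)) ≤ M.length := by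
      rw [e2]; exact wlen_le_spell hMm rfl
    have hge : wlen Sγ (a * g) ≤ 1 + wlen Sγ (a * (a * g)) := by
      have h := wlen_mul_le a⁻¹ (a * (a * g))
      rw [show a⁻¹ * (a * (a * g)) = a * g from by group] at h
      have := wlen_single haiS
      omega
    omega
  have w3 : wlen Sγ (b⁻¹ * g) = M'.length := by
    have hle : wlen Sγ (b⁻¹ * g) ≤ M'.length := by
      rw [e3]; exact wlen_le_spell hM'm rfl
    have hge : n ≤ 1 + wlen Sγ (b⁻¹ * g) := by
      have h := wlen_mul_le b (b⁻¹ * g)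
      rw [show b * (b⁻¹ * g) = g from by group] at h
      have := wlen_single (by simp [Sγ] : (b : F2) ∈ Sγ)
      omega
    omega
  have t1 : (a * g).toWord = push la g.toWord := by rw [a_mk, toWord_cons_mul]
  have t2 : (a * (a * g)).toWord = push la (push la g.toWord) := by
    rw [a_mk, toWord_cons_mul, ← a_mk, t1]
  have t3 : (b⁻¹ * g).toWord = push lB g.toWord := by rw [binv_mk, toWord_cons_mul]
  have F0 := wlen_eq_FF g
  have F1 := wlen_eq_FF (a * g)
  have F2' := wlen_eq_FF (a * (a * g))
  have F3 := wlen_eq_FF (b⁻¹ * g)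
  rw [t1, w1] at F1
  rw [t2, w2] at F2'
  rw [t3, w3] at F3
  rw [← hn] at F0
  -- mirror through the sign flip
  refine main_list (g.toWord.map fl) ⟨?_, ?_, ?_⟩
  · rw [show push lA (g.toWord.map fl) = (push la g.toWord).map fl from push_flip la _,
      FF_flip, FF_flip, ← F1, ← F0]
    push_cast; omega
  · rw [show push lA (g.toWord.map fl) = (push la g.toWord).map fl from push_flip la _,
      show push lA ((push la g.toWord).map fl) = (push la (push la g.toWord)).map fl from
        push_flip la _,
      FF_flip, FF_flip, ← F2', ← F0]
    push_cast; omega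
  · rw [show push lb (g.toWord.map fl) = (push lB g.toWord).map fl from push_flip lB _,
      FF_flip, FF_flip, ← F3, ← F0]
    push_cast; omega

end DAux

open DAux in
/-- If `g ∈ F₂` has a geodesic spelling (w.r.t. `S_γ`) whose first two letters are
`a, a`, then `g` has no geodesic spelling whose first letter is `b⁻¹`; similarly,
if `g'` has a geodesic spelling starting with `a⁻¹, a⁻¹`, then `g'` has no geodesic
spelling starting with `b`. -/
theorem double_a_lemma :
    (∀ g : F2, (∃ l : List F2, (∀ x ∈ l, x ∈ Sγ) ∧ l.prod = g ∧
        l.length = wlen Sγ g ∧ l.take 2 = [a, a]) →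
      ¬ ∃ l' : List F2, (∀ x ∈ l', x ∈ Sγ) ∧ l'.prod = g ∧
        l'.length = wlen Sγ g ∧ l'.head? = some b⁻¹) ∧
    (∀ g' : F2, (∃ l : List F2, (∀ x ∈ l, x ∈ Sγ) ∧ l.prod = g' ∧
        l.length = wlen Sγ g' ∧ l.take 2 = [a⁻¹, a⁻¹]) →
      ¬ ∃ l' : List F2, (∀ x ∈ l', x ∈ Sγ) ∧ l'.prod = g' ∧
        l'.length = wlen Sγ g' ∧ l'.head? = some b) := by
  exact ⟨fun g hg hg' => absurd (And.intro hg hg') (part1 g),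
    fun g hg hg' => absurd (And.intro hg hg') (part2 g)⟩
end

section
/- Let G be a group with finite generating set S closed under inversion and not containing the identity, whose word metric d is δ-hyperbolic for some δ ≥ 0. Then there exists a constant C₁ ≥ 0 (one may take C₁ = 1200δ) such that for all integers k ≥ 1, all g ∈ G with |g| > 4k, and all s ∈ G with |s| = k, one has |(1, gs)_g − (s, gs)_g| ≤ C₁. -/
section Aux
variable {G : Type*} [Group G] {S : Set G}

private lemma wlen_exists_list (hgen : Subgroup.closure S = ⊤)
    (hinv : ∀ s ∈ S, s⁻¹ ∈ S) (g : G) :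
    ∃ l : List G, (∀ x ∈ l, x ∈ S) ∧ l.prod = g := by
  have hg : g ∈ Subgroup.closure S := by rw [hgen]; trivial
  induction hg using Subgroup.closure_induction with
  | mem x hx => exact ⟨[x], by simp [hx]⟩
  | one => exact ⟨[], by simp⟩
  | mul x y hx hy ihx ihy =>
    obtain ⟨l1, h1, p1⟩ := ihx
    obtain ⟨l2, h2, p2⟩ := ihy
    exact ⟨l1 ++ l2, fun z hz => (List.mem_append.mp hz).elim (h1 z) (h2 z),
      by simp [p1, p2]⟩
  | inv x hx ih =>
    obtain ⟨l, h, p⟩ := ih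
    refine ⟨(l.map fun x => x⁻¹).reverse, ?_, by rw [← List.prod_inv_reverse, p]⟩
    intro z hz
    simp only [List.mem_reverse, List.mem_map] at hz
    obtain ⟨a, ha, rfl⟩ := hz
    exact hinv a (h a ha)

private lemma wlen_set_nonempty (hgen : Subgroup.closure S = ⊤)
    (hinv : ∀ s ∈ S, s⁻¹ ∈ S) (g : G) :
    {n | ∃ l : List G, (∀ x ∈ l, x ∈ S) ∧ l.length = n ∧ l.prod = g}.Nonempty := by
  obtain ⟨l, h, p⟩ := wlen_exists_list hgen hinv g
  exact ⟨l.length, l, h, rfl, p⟩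

private lemma wlen_spec (hgen : Subgroup.closure S = ⊤)
    (hinv : ∀ s ∈ S, s⁻¹ ∈ S) (g : G) :
    ∃ l : List G, (∀ x ∈ l, x ∈ S) ∧ l.length = wlen S g ∧ l.prod = g :=
  Nat.sInf_mem (wlen_set_nonempty hgen hinv g)

private lemma wlen_le {g : G} {l : List G} (h : ∀ x ∈ l, x ∈ S) (p : l.prod = g) :
    wlen S g ≤ l.length :=
  Nat.sInf_le ⟨l, h, rfl, p⟩

private lemma wlen_mul_le_s16 (hgen : Subgroup.closure S = ⊤)
    (hinv : ∀ s ∈ S, s⁻¹ ∈ S) (a b : G) :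
    wlen S (a * b) ≤ wlen S a + wlen S b := by
  obtain ⟨l1, h1, len1, p1⟩ := wlen_spec hgen hinv a
  obtain ⟨l2, h2, len2, p2⟩ := wlen_spec hgen hinv b
  have := wlen_le (S := S) (g := a * b) (l := l1 ++ l2)
    (fun z hz => (List.mem_append.mp hz).elim (h1 z) (h2 z)) (by simp [p1, p2])
  simpa [len1, len2] using this

private lemma wlen_inv_le (hgen : Subgroup.closure S = ⊤)
    (hinv : ∀ s ∈ S, s⁻¹ ∈ S) (g : G) : wlen S g⁻¹ ≤ wlen S g := by
  obtain ⟨l, h, len, p⟩ := wlen_spec hgen hinv g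
  have := wlen_le (S := S) (g := g⁻¹) (l := (l.map fun x => x⁻¹).reverse)
    (by
      intro z hz
      simp only [List.mem_reverse, List.mem_map] at hz
      obtain ⟨a, ha, rfl⟩ := hz
      exact hinv a (h a ha))
    (by rw [← List.prod_inv_reverse, p])
  simpa [len] using this

private lemma wlen_inv (hgen : Subgroup.closure S = ⊤)
    (hinv : ∀ s ∈ S, s⁻¹ ∈ S) (g : G) : wlen S g⁻¹ = wlen S g :=
  le_antisymm (wlen_inv_le hgen hinv g) (by
    simpa using wlen_inv_le hgen hinv g⁻¹)

private lemma wdist_symm (hgen : Subgroup.closure S = ⊤)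
    (hinv : ∀ s ∈ S, s⁻¹ ∈ S) (x y : G) : wdist S x y = wdist S y x := by
  unfold wdist
  rw [show x⁻¹ * y = (y⁻¹ * x)⁻¹ by group, wlen_inv hgen hinv]

private lemma wdist_triangle (hgen : Subgroup.closure S = ⊤)
    (hinv : ∀ s ∈ S, s⁻¹ ∈ S) (x y z : G) :
    wdist S x y ≤ wdist S x z + wdist S z y := by
  unfold wdist
  have := wlen_mul_le_s16 hgen hinv (y⁻¹ * z) (z⁻¹ * x)
  rw [show (y⁻¹ * z) * (z⁻¹ * x) = y⁻¹ * x by group] at this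
  have h : (wlen S (y⁻¹ * x) : ℝ) ≤ (wlen S (y⁻¹ * z) : ℝ) + (wlen S (z⁻¹ * x) : ℝ) := by
    exact_mod_cast this
  linarith

private lemma gp_symm (hgen : Subgroup.closure S = ⊤)
    (hinv : ∀ s ∈ S, s⁻¹ ∈ S) (x y w : G) : gp S x y w = gp S y x w := by
  unfold gp
  rw [wdist_symm hgen hinv x w, wdist_symm hgen hinv w y, wdist_symm hgen hinv x y]
  ring

private lemma gp_le_right (hgen : Subgroup.closure S = ⊤)
    (hinv : ∀ s ∈ S, s⁻¹ ∈ S) (x y w : G) : gp S x y w ≤ wdist S w y := by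
  unfold gp
  have h1 := wdist_triangle hgen hinv x w y
  have h2 := wdist_symm hgen hinv y w
  linarith

end Aux

/-- Tree lemma: in a `δ`-hyperbolic group there is a constant `C₁ ≥ 0` (one may take
`C₁ = 1200δ`) such that for all `k ≥ 1`, all `g` with `|g| > 4k` and all `s` on the
sphere of radius `k`, one has `|(1, gs)_g − (s, gs)_g| ≤ C₁`. -/
theorem tree_lemma {G : Type*} [Group G] (S : Set G)
    (hfin : S.Finite) (hgen : Subgroup.closure S = ⊤)
    (hinv : ∀ s ∈ S, s⁻¹ ∈ S) (hone : (1 : G) ∉ S)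
    (δ : ℝ) (hδ : 0 ≤ δ) (hhyp : IsDeltaHyperbolic S δ) :
    ∃ C₁ : ℝ, 0 ≤ C₁ ∧ C₁ = 1200 * δ ∧
      ∀ k : ℕ, 1 ≤ k → ∀ g : G, 4 * k < wlen S g → ∀ s : G, wlen S s = k →
        |gp S 1 (g * s) g - gp S s (g * s) g| ≤ C₁ := by
  refine ⟨1200 * δ, by linarith, rfl, ?_⟩
  intro k hk g hg s hs
  -- key distances
  have hsinv : wlen S s⁻¹ = k := by rw [wlen_inv hgen hinv, hs]
  have hdggs : wdist S g (g * s) = (k : ℝ) := by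
    unfold wdist
    rw [show (g * s)⁻¹ * g = s⁻¹ by group, hsinv]
  -- (s, gs)_g ≤ k and (1, gs)_g ≤ k
  have hb : gp S s (g * s) g ≤ (k : ℝ) := hdggs ▸ gp_le_right hgen hinv s (g * s) g
  have ha : gp S 1 (g * s) g ≤ (k : ℝ) := hdggs ▸ gp_le_right hgen hinv 1 (g * s) g
  -- (1, s)_g ≥ |g| - k > k
  have hgs1 : gp S 1 s g > (k : ℝ) := by
    have htri : (wlen S g : ℝ) ≤ wlen S (s⁻¹ * g) + k := by
      have := wlen_mul_le_s16 hgen hinv s (s⁻¹ * g)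
      rw [show s * (s⁻¹ * g) = g by group, hs] at this
      exact_mod_cast by exact_mod_cast Nat.cast_le.mpr this |>.trans_eq (by push_cast; ring)
    have h1g : wdist S 1 g = (wlen S g⁻¹ : ℝ) := by unfold wdist; rw [mul_one]
    have hgs : wdist S g s = (wlen S (s⁻¹ * g) : ℝ) := rfl
    have h1s : wdist S 1 s = (k : ℝ) := by unfold wdist; rw [mul_one, hsinv]
    have hginv : wlen S g⁻¹ = wlen S g := wlen_inv hgen hinv g
    have hglarge : (4 * k : ℝ) < wlen S g := by exact_mod_cast hg
    unfold gp
    rw [h1g, hgs, h1s, hginv]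
    have hk1 : (1 : ℝ) ≤ k := by exact_mod_cast hk
    linarith
  -- hyperbolicity both ways
  have h1 := hhyp 1 (g * s) s g
  have h2 := hhyp s (g * s) 1 g
  rw [gp_symm hgen hinv (g * s) s g] at h1
  rw [gp_symm hgen hinv (g * s) 1 g] at h2
  rw [min_eq_right (by linarith : gp S s (g * s) g ≤ gp S 1 s g)] at h1
  rw [gp_symm hgen hinv s 1 g] at h2
  rw [min_eq_right (by linarith : gp S 1 (g * s) g ≤ gp S 1 s g)] at h2
  rw [abs_le]
  constructor <;> linarith
end
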